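/- Lemma A.3 (Hessian Lipschitz-type remainder bound). In the sequence-of-problems setting with i.i.d. Ising data, suppose the sample condition Λ_max(Û^{(k)}_{S_k,S_k}) ≤ τ_max holds. Then, with probability tending to one, for every α_k ∈ [0,1] and every perturbation δ̲^{(k)} ∈ ℝ^{p(p−1)/2} supported on S_k, ‖[∇² l_k(θ̄^{(k)} + α_k δ̲^{(k)}) − ∇² l_k(θ̄^{(k)})] δ̲^{(k)}‖_∞ ≤ τ_max ‖δ̲^{(k)}‖_2². -/

import Mathlib

open Filter Finset Matrix

noncomputable section

/-- Real value of a binary (0/1) observation. -/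
def toR (b : Bool) : ℝ := if b then 1 else 0

/-- Index set of pairs (j,j') with j < j'. -/
abbrev PairIdx (p : ℕ) := {q : Fin p × Fin p // q.1 < q.2}

/-- Symmetric extension of a vector indexed by pairs j < j'. -/
def symExt {p : ℕ} (θ : PairIdx p → ℝ) (j j' : Fin p) : ℝ :=
  if h : j < j' then θ ⟨(j, j'), h⟩ else if h' : j' < j then θ ⟨(j', j), h'⟩ else 0

/-- Energy of the main-effect-free Ising model. -/
def isingEnergy {p : ℕ} (θ : PairIdx p → ℝ) (x : Fin p → Bool) : ℝ :=
  ∑ e : PairIdx p, θ e * toR (x e.1.1) * toR (x e.1.2)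

/-- Pmf of the main-effect-free Ising model. -/
def isingPmf {p : ℕ} (θ : PairIdx p → ℝ) (x : Fin p → Bool) : ℝ :=
  Real.exp (isingEnergy θ x) / ∑ y : Fin p → Bool, Real.exp (isingEnergy θ y)

/-- Energy of the Ising model with main effects, parameter a symmetric matrix. -/
def isingEnergyFull {p : ℕ} (Θ : Matrix (Fin p) (Fin p) ℝ) (x : Fin p → Bool) : ℝ :=
  ∑ j, Θ j j * toR (x j) + ∑ e : PairIdx p, Θ e.1.1 e.1.2 * toR (x e.1.1) * toR (x e.1.2)

/-- Pmf of the Ising model with main effects. -/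
def isingPmfFull {p : ℕ} (Θ : Matrix (Fin p) (Fin p) ℝ) (x : Fin p → Bool) : ℝ :=
  Real.exp (isingEnergyFull Θ x) / ∑ y : Fin p → Bool, Real.exp (isingEnergyFull Θ y)

/-- Local field at node j (no main effects). -/
def localField {p : ℕ} (θ : PairIdx p → ℝ) (x : Fin p → Bool) (j : Fin p) : ℝ :=
  ∑ j' ∈ Finset.univ.erase j, symExt θ j j' * toR (x j')

/-- One-observation pseudo-log-likelihood (no main effects). -/
def pllOne {p : ℕ} (x : Fin p → Bool) (θ : PairIdx p → ℝ) : ℝ :=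
  ∑ j, (toR (x j) * localField θ x j - Real.log (1 + Real.exp (localField θ x j)))

/-- Pseudo-log-likelihood of n observations (no main effects). -/
def pll {p n : ℕ} (x : Fin n → Fin p → Bool) (θ : PairIdx p → ℝ) : ℝ :=
  (n : ℝ)⁻¹ * ∑ i, pllOne (x i) θ

/-- One-observation pseudo-log-likelihood with main effects (matrix parameter). -/
def pllMainOne {p : ℕ} (x : Fin p → Bool) (Θ : Matrix (Fin p) (Fin p) ℝ) : ℝ :=
  ∑ j, (toR (x j) * (Θ j j + ∑ j' ∈ Finset.univ.erase j, Θ j j' * toR (x j'))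
    - Real.log (1 + Real.exp (Θ j j + ∑ j' ∈ Finset.univ.erase j, Θ j j' * toR (x j'))))

/-- Pseudo-log-likelihood with main effects of n observations. -/
def pllMain {p n : ℕ} (x : Fin n → Fin p → Bool) (Θ : Matrix (Fin p) (Fin p) ℝ) : ℝ :=
  (n : ℝ)⁻¹ * ∑ i, pllMainOne (x i) Θ

/-- Entrywise (Schur--Hadamard) product of matrices. -/
def hprod {p : ℕ} (A B : Matrix (Fin p) (Fin p) ℝ) : Matrix (Fin p) (Fin p) ℝ :=
  Matrix.of fun i j => A i j * B i j

/-- Partial derivative of l at θ in coordinate e. -/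
def gradAt {p : ℕ} (l : (PairIdx p → ℝ) → ℝ) (θ : PairIdx p → ℝ) (e : PairIdx p) : ℝ :=
  fderiv ℝ l θ (Pi.single e 1)

/-- Hessian matrix of l at θ. -/
def hessAt {p : ℕ} (l : (PairIdx p → ℝ) → ℝ) (θ : PairIdx p → ℝ) :
    Matrix (PairIdx p) (PairIdx p) ℝ :=
  Matrix.of fun e e' => fderiv ℝ (fun t => fderiv ℝ l t (Pi.single e' 1)) θ (Pi.single e 1)

/-- Design matrix of an observation: column (j,j') has x_{j'} in row j and x_j in row j'. -/
def designMat {p : ℕ} (x : Fin p → Bool) : Matrix (Fin p) (PairIdx p) ℝ :=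
  Matrix.of fun j e => if j = e.1.1 then toR (x e.1.2) else if j = e.1.2 then toR (x e.1.1) else 0

/-- Probability of E under the weight w on a finite sample space. -/
def finProb {Ω : Type*} [Fintype Ω] (w : Ω → ℝ) (E : Set Ω) : ℝ :=
  ∑ ω, Set.indicator E w ω

/-- Euclidean norm. -/
def euclNorm {ι : Type*} [Fintype ι] (v : ι → ℝ) : ℝ := Real.sqrt (∑ i, v i ^ 2)

/-- Sup norm of a vector. -/
def supNorm {ι : Type*} [Fintype ι] (v : ι → ℝ) : ℝ := ⨆ i, |v i|

/-- Smallest eigenvalue of a symmetric matrix, via the Rayleigh quotient. -/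
def lamMin {ι : Type*} [Fintype ι] (A : Matrix ι ι ℝ) : ℝ :=
  ⨅ v : {v : ι → ℝ // ∑ i, v i ^ 2 = 1}, v.1 ⬝ᵥ A.mulVec v.1

/-- Largest eigenvalue of a symmetric matrix, via the Rayleigh quotient. -/
def lamMax {ι : Type*} [Fintype ι] (A : Matrix ι ι ℝ) : ℝ :=
  ⨆ v : {v : ι → ℝ // ∑ i, v i ^ 2 = 1}, v.1 ⬝ᵥ A.mulVec v.1

/-- Maximum absolute row sum norm. -/
def rowSumNorm {ι κ : Type*} [Fintype ι] [Fintype κ] (A : Matrix ι κ ℝ) : ℝ :=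
  ⨆ i, ∑ j, |A i j|

/-- Submatrix with rows in S and columns in T. -/
def subm {ι : Type*} (A : Matrix ι ι ℝ) (S T : Finset ι) : Matrix ↥S ↥T ℝ :=
  A.submatrix (fun i => i.1) (fun j => j.1)

/-- Support of a parameter vector, as a finset of pairs. -/
def suppF {p : ℕ} (θ : PairIdx p → ℝ) : Finset (PairIdx p) :=
  Finset.univ.filter (fun e => θ e ≠ 0)

/-- Union of the supports over the K categories. -/
def unionSupp {p K : ℕ} (θb : Fin K → PairIdx p → ℝ) : Finset (PairIdx p) :=
  Finset.univ.filter (fun e => ∃ k, θb k e ≠ 0)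

/-- Population Fisher information of the pseudo-likelihood. -/
def Qpop {p : ℕ} (θb : PairIdx p → ℝ) : Matrix (PairIdx p) (PairIdx p) ℝ :=
  - ∑ x : Fin p → Bool, isingPmf θb x • hessAt (pllOne x) θb

/-- Sample Fisher information of the pseudo-likelihood at the truth. -/
def Qhat {p n : ℕ} (x : Fin n → Fin p → Bool) (θb : PairIdx p → ℝ) :
    Matrix (PairIdx p) (PairIdx p) ℝ :=
  - hessAt (pll x) θb

/-- Population second-moment matrix of the design matrices. -/
def Upop {p : ℕ} (θb : PairIdx p → ℝ) : Matrix (PairIdx p) (PairIdx p) ℝ :=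
  ∑ x : Fin p → Bool, isingPmf θb x • ((designMat x)ᵀ * designMat x)

/-- Sample second-moment matrix of the design matrices. -/
def Uhat {p n : ℕ} (x : Fin n → Fin p → Bool) : Matrix (PairIdx p) (PairIdx p) ℝ :=
  (n : ℝ)⁻¹ • ∑ i, ((designMat (x i))ᵀ * designMat (x i))

/-- Joint group-penalized pseudo-likelihood criterion F_λ. -/
def jointCrit {p K : ℕ} (nk : Fin K → ℕ) (x : ∀ k, Fin (nk k) → Fin p → Bool) (lam : ℝ)
    (θ : Fin K → PairIdx p → ℝ) : ℝ :=
  ∑ k, pll (x k) (θ k) - lam * ∑ e : PairIdx p, Real.sqrt (∑ k, |θ k e|)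

/-- Product (i.i.d. across observations and categories) weight of a multi-category sample. -/
def prodW {K p : ℕ} (nk : Fin K → ℕ) (θb : Fin K → PairIdx p → ℝ)
    (xs : ∀ k, Fin (nk k) → Fin p → Bool) : ℝ :=
  ∏ k, ∏ i, isingPmf (θb k) (xs k i)

end


/-!
Up to the factor `1/n`, the pseudo-log-likelihood is the log-likelihood of a logistic regression
whose design `A` stacks the rows of the design matrices `𝒳_(i)`, so its Hessian is
`-(1/n) Aᵀ diag(σ'(Aθ)) A`. Since `σ'` is 1-Lipschitz and the entries of `A` lie in `[0, 1]`,
each entry of `[∇² l(θ + αδ) - ∇² l(θ)] δ` is at most `(1/n) ‖Aδ‖₂² = δᵀ Û δ`, and the eigenvalue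
condition bounds this by `τ_max ‖δ‖₂²` when `δ` is supported on `S`. The bound thus holds
deterministically on the event, which has probability one.
-/

open Real

lemma hasDerivAt_log_one_add_exp (u : ℝ) :
    HasDerivAt (fun v => log (1 + exp v)) (sigmoid u) u := by
  convert ((hasDerivAt_exp u).const_add 1).log (by positivity) using 1
  rw [sigmoid_def, exp_neg]
  field_simp
  ring

lemma hasDerivAt_deriv_sigmoid (u : ℝ) :
    HasDerivAt (deriv sigmoid) (sigmoid u * (1 - sigmoid u) * (1 - 2 * sigmoid u)) u := by
  rw [deriv_sigmoid]
  exact ((hasDerivAt_sigmoid u).mul ((hasDerivAt_sigmoid u).const_sub 1)).congr_deriv (by ring)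

lemma lipschitzWith_deriv_sigmoid : LipschitzWith 1 (deriv sigmoid) := by
  refine lipschitzWith_of_nnnorm_deriv_le
    (fun u => (hasDerivAt_deriv_sigmoid u).differentiableAt) fun u => ?_
  rw [(hasDerivAt_deriv_sigmoid u).deriv, ← NNReal.coe_le_coe, coe_nnnorm, NNReal.coe_one,
    Real.norm_eq_abs, abs_le]
  have h0 := sigmoid_pos u
  have h1 := sigmoid_lt_one u
  constructor <;> nlinarith [mul_pos h0 (sub_pos.2 h1)]

lemma abs_deriv_sigmoid_sub_le (a b : ℝ) : |deriv sigmoid a - deriv sigmoid b| ≤ |a - b| := by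
  simpa [Real.dist_eq] using lipschitzWith_deriv_sigmoid.dist_le_mul a b

noncomputable section LogisticLogLik

variable {ρ ι : Type*} [Fintype ι] (A : Matrix ρ ι ℝ)

def mulVecApplyCLM (r : ρ) : (ι → ℝ) →L[ℝ] ℝ :=
  (ContinuousLinearMap.proj r).comp (LinearMap.toContinuousLinearMap (Matrix.mulVecLin A))

@[simp]
lemma mulVecApplyCLM_apply (r : ρ) (v : ι → ℝ) : mulVecApplyCLM A r v = (A *ᵥ v) r := by
  simp [mulVecApplyCLM]

lemma hasFDerivAt_mulVec_apply (r : ρ) (θ : ι → ℝ) :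
    HasFDerivAt (fun t => (A *ᵥ t) r) (mulVecApplyCLM A r) θ := by
  convert (mulVecApplyCLM A r).hasFDerivAt using 1
  ext t
  simp

variable [Fintype ρ] (y : ρ → ℝ)

def logisticLogLik (θ : ι → ℝ) : ℝ :=
  ∑ r, (y r * (A *ᵥ θ) r - log (1 + exp ((A *ᵥ θ) r)))

lemma hasFDerivAt_logisticLogLik (θ : ι → ℝ) :
    HasFDerivAt (logisticLogLik A y)
      (∑ r, (y r - sigmoid ((A *ᵥ θ) r)) • mulVecApplyCLM A r) θ := by
  refine HasFDerivAt.fun_sum fun r _ => ?_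
  have hlin := hasFDerivAt_mulVec_apply A r θ
  exact ((hlin.const_mul (y r)).sub ((hasDerivAt_log_one_add_exp _).comp_hasFDerivAt θ hlin))
    |>.congr_fderiv (sub_smul _ _ _).symm

lemma fderiv_logisticLogLik_apply (θ u : ι → ℝ) :
    fderiv ℝ (logisticLogLik A y) θ u = ∑ r, (y r - sigmoid ((A *ᵥ θ) r)) * (A *ᵥ u) r := by
  simp [(hasFDerivAt_logisticLogLik A y θ).fderiv]

lemma hasFDerivAt_fderiv_logisticLogLik_apply (u θ : ι → ℝ) :
    HasFDerivAt (fun t => fderiv ℝ (logisticLogLik A y) t u)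
      (-∑ r, ((A *ᵥ u) r * deriv sigmoid ((A *ᵥ θ) r)) • mulVecApplyCLM A r) θ := by
  simp only [fderiv_logisticLogLik_apply, ← Finset.sum_neg_distrib]
  refine HasFDerivAt.fun_sum fun r _ => ?_
  have hσ := differentiableAt_sigmoid.hasDerivAt.comp_hasFDerivAt θ
    (hasFDerivAt_mulVec_apply A r θ)
  exact ((hσ.const_sub (y r)).mul_const ((A *ᵥ u) r)).congr_fderiv (by ext v; simp; ring)

lemma fderiv_fderiv_logisticLogLik_apply (θ u v : ι → ℝ) :
    fderiv ℝ (fun t => fderiv ℝ (logisticLogLik A y) t u) θ v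
      = -∑ r, deriv sigmoid ((A *ᵥ θ) r) * (A *ᵥ u) r * (A *ᵥ v) r := by
  simp [(hasFDerivAt_fderiv_logisticLogLik_apply A y u θ).fderiv, mul_comm]

/-- The Fisher information `Aᵀ diag(σ'(Aθ)) A`, minus the Hessian of `logisticLogLik A y`. -/
def logisticFisherInfo (θ : ι → ℝ) : Matrix ι ι ℝ :=
  Matrix.of fun e e' => ∑ r, deriv sigmoid ((A *ᵥ θ) r) * A r e * A r e'

lemma fderiv_fderiv_const_mul_logisticLogLik_single [DecidableEq ι] (c : ℝ) (θ : ι → ℝ)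
    (e e' : ι) :
    fderiv ℝ (fun t => fderiv ℝ (fun θ => c * logisticLogLik A y θ) t (Pi.single e' 1)) θ
      (Pi.single e 1) = -(c • logisticFisherInfo A θ) e e' := by
  have hdiff : ∀ t, DifferentiableAt ℝ (logisticLogLik A y) t := fun t =>
    (hasFDerivAt_logisticLogLik A y t).differentiableAt
  have hinner : (fun t => fderiv ℝ (fun θ => c * logisticLogLik A y θ) t (Pi.single e' 1))
      = fun t => c * fderiv ℝ (logisticLogLik A y) t (Pi.single e' 1) := by
    ext t
    rw [fderiv_const_mul (hdiff t), _root_.smul_apply, smul_eq_mul]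
  rw [hinner, fderiv_const_mul
    (hasFDerivAt_fderiv_logisticLogLik_apply A y _ θ).differentiableAt,
    _root_.smul_apply, fderiv_fderiv_logisticLogLik_apply]
  simp [logisticFisherInfo, Finset.mul_sum, mul_comm, mul_left_comm]

lemma logisticFisherInfo_mulVec_apply (θ δ : ι → ℝ) (e : ι) :
    (logisticFisherInfo A θ *ᵥ δ) e = ∑ r, deriv sigmoid ((A *ᵥ θ) r) * A r e * (A *ᵥ δ) r := by
  simp only [logisticFisherInfo, mulVec, dotProduct, of_apply, Finset.sum_mul, Finset.mul_sum]
  rw [Finset.sum_comm]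
  exact Finset.sum_congr rfl fun r _ => Finset.sum_congr rfl fun e' _ => by ring

lemma abs_logisticFisherInfo_sub_mulVec_apply_le (hA : ∀ r e, |A r e| ≤ 1) (θ δ : ι → ℝ)
    {α : ℝ} (hα : α ∈ Set.Icc (0 : ℝ) 1) (e : ι) :
    |((logisticFisherInfo A θ - logisticFisherInfo A (θ + α • δ)) *ᵥ δ) e|
      ≤ ∑ r, (A *ᵥ δ) r ^ 2 := by
  rw [sub_mulVec, Pi.sub_apply, logisticFisherInfo_mulVec_apply,
    logisticFisherInfo_mulVec_apply, ← Finset.sum_sub_distrib]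
  refine (Finset.abs_sum_le_sum_abs _ _).trans (Finset.sum_le_sum fun r _ => ?_)
  have hweight : |deriv sigmoid ((A *ᵥ θ) r) - deriv sigmoid ((A *ᵥ (θ + α • δ)) r)|
      ≤ |(A *ᵥ δ) r| := calc
    _ ≤ |(A *ᵥ θ) r - (A *ᵥ (θ + α • δ)) r| := abs_deriv_sigmoid_sub_le _ _
    _ = |α| * |(A *ᵥ δ) r| := by
      rw [mulVec_add, mulVec_smul, Pi.add_apply, Pi.smul_apply, smul_eq_mul, sub_add_cancel_left,
        abs_neg, abs_mul]
    _ ≤ |(A *ᵥ δ) r| := by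
      rw [abs_of_nonneg hα.1]
      exact mul_le_of_le_one_left (abs_nonneg _) hα.2
  calc _ = |deriv sigmoid ((A *ᵥ θ) r) - deriv sigmoid ((A *ᵥ (θ + α • δ)) r)|
        * |A r e| * |(A *ᵥ δ) r| := by rw [← sub_mul, ← sub_mul, abs_mul, abs_mul]
    _ ≤ |(A *ᵥ δ) r| * 1 * |(A *ᵥ δ) r| := by gcongr; exact hA r e
    _ = (A *ᵥ δ) r ^ 2 := by rw [mul_one, abs_mul_abs_self, sq]

end LogisticLogLik

section Rayleigh

variable {ι : Type*} [Fintype ι]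

lemma bddAbove_rayleigh (A : Matrix ι ι ℝ) :
    BddAbove (Set.range fun v : {v : ι → ℝ // ∑ i, v i ^ 2 = 1} => v.1 ⬝ᵥ A *ᵥ v.1) := by
  refine ⟨∑ i, ∑ j, |A i j|, ?_⟩
  rintro _ ⟨⟨v, hv⟩, rfl⟩
  have hle : ∀ i, |v i| ≤ 1 := fun i => (sq_le_one_iff_abs_le_one _).1 <|
    hv ▸ Finset.single_le_sum (fun k _ => sq_nonneg (v k)) (Finset.mem_univ i)
  calc v ⬝ᵥ A *ᵥ v = ∑ i, ∑ j, v i * A i j * v j := by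
        simp only [dotProduct, mulVec, Finset.mul_sum, mul_assoc]
    _ ≤ ∑ i, ∑ j, |A i j| := by
      gcongr with i _ j _
      calc v i * A i j * v j ≤ |v i| * |A i j| * |v j| := by
            rw [← abs_mul, ← abs_mul]; exact le_abs_self _
        _ ≤ 1 * |A i j| * 1 := by gcongr <;> exact hle _
        _ = |A i j| := by ring

lemma dotProduct_mulVec_le_lamMax_mul (A : Matrix ι ι ℝ) (v : ι → ℝ) :
    v ⬝ᵥ A *ᵥ v ≤ lamMax A * ∑ i, v i ^ 2 := by
  obtain rfl | hv := eq_or_ne v 0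
  · simp
  set s := ∑ i, v i ^ 2
  have hs : 0 < s := by
    refine lt_of_le_of_ne (Finset.sum_nonneg fun i _ => sq_nonneg _) (Ne.symm fun h => hv ?_)
    ext i
    simpa using (Finset.sum_eq_zero_iff_of_nonneg (fun i _ => sq_nonneg (v i))).1 h i
      (Finset.mem_univ i)
  have hunit : ∑ i, ((√s)⁻¹ • v) i ^ 2 = 1 := by
    simp only [Pi.smul_apply, smul_eq_mul, mul_pow, ← Finset.mul_sum, inv_pow,
      sq_sqrt hs.le]
    exact inv_mul_cancel₀ hs.ne'
  have hray := le_ciSup (bddAbove_rayleigh A) ⟨_, hunit⟩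
  simp only [mulVec_smul, dotProduct_smul, smul_dotProduct, smul_eq_mul, ← mul_assoc,
    ← sq, inv_pow, sq_sqrt hs.le] at hray
  rwa [inv_mul_le_iff₀ hs, mul_comm] at hray

lemma dotProduct_mulVec_le_of_lamMax_subm_le {A : Matrix ι ι ℝ} {S : Finset ι} {v : ι → ℝ}
    (hv : ∀ i, i ∉ S → v i = 0) {τ : ℝ} (hτ : lamMax (subm A S S) ≤ τ) :
    v ⬝ᵥ A *ᵥ v ≤ τ * ∑ i, v i ^ 2 := by
  have hsum : ∀ g : ι → ℝ, (∀ i, i ∉ S → g i = 0) → ∑ i : S, g i = ∑ i, g i := fun g hg =>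
    (Finset.sum_coe_sort S g).trans
      (Finset.sum_subset (Finset.subset_univ S) fun i _ hi => hg i hi)
  have hquad : v ⬝ᵥ A *ᵥ v = (fun i : S => v i) ⬝ᵥ subm A S S *ᵥ fun i : S => v i := calc
    _ = ∑ i, v i * ∑ j : S, A i j * v j := Finset.sum_congr rfl fun i _ =>
      congrArg (v i * ·) (hsum (fun j => A i j * v j) fun j hj => by simp [hv j hj]).symm
    _ = _ := (hsum _ fun i hi => by simp [hv i hi]).symm
  rw [hquad, ← hsum _ fun i hi => by simp [hv i hi]]
  exact (dotProduct_mulVec_le_lamMax_mul _ _).trans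
    (mul_le_mul_of_nonneg_right hτ (Finset.sum_nonneg fun i _ => sq_nonneg _))

end Rayleigh

section PseudoLogLik

variable {p n : ℕ}

lemma abs_designMat_le_one (x : Fin p → Bool) (j : Fin p) (e : PairIdx p) :
    |designMat x j e| ≤ 1 := by
  simp only [designMat, toR, of_apply]
  split_ifs <;> simp

lemma localField_eq_mulVec (θ : PairIdx p → ℝ) (x : Fin p → Bool) (j : Fin p) :
    localField θ x j = (designMat x *ᵥ θ) j := by
  classical
  -- Extending `θ` by zero off `{j < j'}` turns both sides into sums over all ordered pairs.
  set θ' : Fin p × Fin p → ℝ := fun q => if h : q.1 < q.2 then θ ⟨q, h⟩ else 0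
  have hsym : ∀ j', symExt θ j j' = θ' (j, j') + θ' (j', j) := by
    intro j'
    simp only [symExt, θ']
    split_ifs with h1 h2 <;> first | exact absurd h2 (lt_asymm h1) | simp
  have hdesign : ∀ e : PairIdx p, designMat x j e * θ e =
      ((if j = e.1.1 then toR (x e.1.2) else 0) + (if j = e.1.2 then toR (x e.1.1) else 0))
        * θ' e.1 := by
    intro e
    have := e.2.ne
    simp only [designMat, θ', of_apply, dif_pos e.2]
    split_ifs <;> simp_all
  rw [localField, mulVec, dotProduct]
  simp only [hdesign]
  rw [← Finset.sum_subtype (univ.filter fun q : Fin p × Fin p => q.1 < q.2) (by simp)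
      (fun q : Fin p × Fin p =>
        ((if j = q.1 then toR (x q.2) else 0) + (if j = q.2 then toR (x q.1) else 0)) * θ' q),
    Finset.sum_filter_of_ne fun q _ hq => by by_contra h; exact hq (by simp [θ', dif_neg h]),
    Fintype.sum_prod_type]
  simp only [add_mul, ite_mul, zero_mul, Finset.sum_add_distrib, Finset.sum_ite_irrel,
    Finset.sum_const_zero, Finset.sum_ite_eq, Finset.mem_univ, if_true]
  rw [Finset.sum_erase _ (by simp [hsym, θ']), ← Finset.sum_add_distrib]
  exact Finset.sum_congr rfl fun j' _ => by rw [hsym]; ring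

def stackedDesign (x : Fin n → Fin p → Bool) : Matrix (Fin n × Fin p) (PairIdx p) ℝ :=
  Matrix.of fun r e => designMat (x r.1) r.2 e

lemma pll_eq_logisticLogLik (x : Fin n → Fin p → Bool) :
    pll x = fun θ => (n : ℝ)⁻¹ * logisticLogLik (stackedDesign x) (fun r => toR (x r.1 r.2)) θ := by
  ext θ
  simp only [pll, pllOne, logisticLogLik, localField_eq_mulVec, Fintype.sum_prod_type]
  rfl

lemma hessAt_pll (x : Fin n → Fin p → Bool) (θ : PairIdx p → ℝ) :
    hessAt (pll x) θ = -((n : ℝ)⁻¹ • logisticFisherInfo (stackedDesign x) θ) := by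
  ext e e'
  rw [hessAt, of_apply, pll_eq_logisticLogLik]
  exact fderiv_fderiv_const_mul_logisticLogLik_single _ _ _ θ e e'

lemma dotProduct_Uhat_mulVec (x : Fin n → Fin p → Bool) (δ : PairIdx p → ℝ) :
    δ ⬝ᵥ Uhat x *ᵥ δ = (n : ℝ)⁻¹ * ∑ r, (stackedDesign x *ᵥ δ) r ^ 2 := by
  have hU : Uhat x = (n : ℝ)⁻¹ • ((stackedDesign x)ᵀ * stackedDesign x) := by
    ext e e'
    simp [Uhat, stackedDesign, Matrix.mul_apply, Matrix.sum_apply, Fintype.sum_prod_type]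
  rw [hU, smul_mulVec, dotProduct_smul, smul_eq_mul, ← mulVec_mulVec, dotProduct_mulVec,
    vecMul_transpose]
  simp only [dotProduct, sq]

theorem supNorm_hessAt_pll_sub_mulVec_le (x : Fin n → Fin p → Bool) (θ δ : PairIdx p → ℝ)
    {α : ℝ} (hα : α ∈ Set.Icc (0 : ℝ) 1) {S : Finset (PairIdx p)} (hδ : ∀ e, e ∉ S → δ e = 0)
    {τ : ℝ} (hτ : lamMax (subm (Uhat x) S S) ≤ τ) :
    supNorm ((hessAt (pll x) (θ + α • δ) - hessAt (pll x) θ) *ᵥ δ) ≤ τ * euclNorm δ ^ 2 := by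
  have hq : δ ⬝ᵥ Uhat x *ᵥ δ ≤ τ * euclNorm δ ^ 2 := by
    rw [euclNorm, sq_sqrt (by positivity)]
    exact dotProduct_mulVec_le_of_lamMax_subm_le hδ hτ
  have hq_nonneg : 0 ≤ δ ⬝ᵥ Uhat x *ᵥ δ := by
    rw [dotProduct_Uhat_mulVec]
    positivity
  have hentry : ∀ e, |((hessAt (pll x) (θ + α • δ) - hessAt (pll x) θ) *ᵥ δ) e|
      ≤ δ ⬝ᵥ Uhat x *ᵥ δ := by
    intro e
    rw [dotProduct_Uhat_mulVec, hessAt_pll, hessAt_pll, neg_sub_neg, ← smul_sub, smul_mulVec,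
      Pi.smul_apply, smul_eq_mul, abs_mul, abs_of_nonneg (by positivity)]
    exact mul_le_mul_of_nonneg_left (abs_logisticFisherInfo_sub_mulVec_apply_le _
      (fun r e => abs_designMat_le_one _ _ _) θ δ hα e) (by positivity)
  exact Real.iSup_le (fun e => (hentry e).trans hq) (hq_nonneg.trans hq)

end PseudoLogLik

lemma finProb_of_forall_mem {Ω : Type*} [Fintype Ω] (w : Ω → ℝ) {E : Set Ω}
    (hE : ∀ ω, ω ∈ E) : finProb w E = ∑ ω, w ω := by
  simp [finProb, Set.eq_univ_of_forall hE]

lemma sum_isingPmf {p : ℕ} (θ : PairIdx p → ℝ) : ∑ x, isingPmf θ x = 1 := by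
  simp only [isingPmf]
  rw [← Finset.sum_div,
    div_self (Finset.sum_pos (fun y _ => exp_pos _) Finset.univ_nonempty).ne']

lemma sum_prodW {K p : ℕ} (nk : Fin K → ℕ) (θb : Fin K → PairIdx p → ℝ) :
    ∑ xs, prodW nk θb xs = 1 := by
  unfold prodW
  rw [← Fintype.prod_sum (κ := fun k => Fin (nk k) → Fin p → Bool)
    fun k xk => ∏ i, isingPmf (θb k) (xk i)]
  refine Finset.prod_eq_one fun k _ => ?_
  rw [← Fintype.prod_sum (κ := fun _ => Fin p → Bool) fun _ x => isingPmf (θb k) x]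
  exact Finset.prod_eq_one fun _ _ => sum_isingPmf _

theorem stmt_12_general (K : ℕ)
    (p : ℕ → ℕ)
    (nk : ℕ → Fin K → ℕ)
    (θbar : ∀ n : ℕ, Fin K → PairIdx (p n) → ℝ)
    (τmax : ℝ) :
    Filter.Tendsto
      (fun n : ℕ =>
        finProb (prodW (nk n) (θbar n))
          {xs |
            (∀ k, lamMax (subm (Uhat (xs k)) (suppF (θbar n k)) (suppF (θbar n k))) ≤ τmax) →
            ∀ (k : Fin K) (α : ℝ) (δ : PairIdx (p n) → ℝ),
              α ∈ Set.Icc (0 : ℝ) 1 →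
              (∀ e, e ∉ suppF (θbar n k) → δ e = 0) →
              supNorm
                  ((hessAt (pll (xs k)) (θbar n k + α • δ)
                    - hessAt (pll (xs k)) (θbar n k)).mulVec δ)
                ≤ τmax * euclNorm δ ^ 2})
      Filter.atTop (nhds 1) := by
  refine tendsto_const_nhds.congr fun n => Eq.symm ?_
  rw [finProb_of_forall_mem, sum_prodW]
  exact fun xs hU k _ δ hα hδ => supNorm_hessAt_pll_sub_mulVec_le (xs k) (θbar n k) δ hα hδ (hU k)

/-- Lemma A.3 (Hessian Lipschitz-type remainder bound): under the sample condition
`Λ_max(Û^{(k)}_{S_k,S_k}) ≤ τ_max` (an antecedent inside the event since it depends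
on the data), with probability tending to one, for every `α_k ∈ [0,1]` and every
perturbation supported on `S_k`,
`‖[∇² l_k(θ̄ + α δ) − ∇² l_k(θ̄)] δ‖_∞ ≤ τ_max ‖δ‖₂²`. -/
theorem stmt_12 (K : ℕ) (hK : 1 ≤ K)
    (p : ℕ → ℕ) (hp : ∀ n, 1 ≤ p n)
    (nk : ℕ → Fin K → ℕ) (hn : ∀ n, ∑ k, nk n k = n)
    (θbar : ∀ n : ℕ, Fin K → PairIdx (p n) → ℝ)
    (τmax : ℝ) (hτmax : 0 < τmax) :
    Filter.Tendsto
      (fun n : ℕ =>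
        finProb (prodW (nk n) (θbar n))
          {xs |
            (∀ k, lamMax (subm (Uhat (xs k)) (suppF (θbar n k)) (suppF (θbar n k))) ≤ τmax) →
            ∀ (k : Fin K) (α : ℝ) (δ : PairIdx (p n) → ℝ),
              α ∈ Set.Icc (0 : ℝ) 1 →
              (∀ e, e ∉ suppF (θbar n k) → δ e = 0) →
              supNorm
                  ((hessAt (pll (xs k)) (θbar n k + α • δ)
                    - hessAt (pll (xs k)) (θbar n k)).mulVec δ)
                ≤ τmax * euclNorm δ ^ 2})
      Filter.atTop (nhds 1) :=
  stmt_12_general K p nk θbar τmax
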